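/- Let w_n be the Moser sequence and λ_n := (1 − (log log n)/(4 log n))^{1/2}, R_n := √(log n)/(log log n), and u_n(x) := λ_n w_n(x/R_n). Then ∫_{ℝ²}(e^{4π u_n²} − 1) dx ≥ π R_n² (1/√(log n) − 1/n²), and consequently ∫_{ℝ²}(e^{4π u_n²} − 1) dx → +∞ as n → ∞. -/

import Mathlib

/-!
On the ball of radius `Rₙ/n` the function `uₙ` is the constant `λₙ √(log n) / √(2π)`,
at which `e^{4π uₙ²} = n² / √(log n)`. The integrand is nonnegative, so the integral is at least
`(n² / √(log n) - 1) · π (Rₙ/n)² = π Rₙ² (1/√(log n) - 1/n²)`, which grows like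
`√(log n) / (log log n)²`.
-/

open MeasureTheory Real Filter Metric Set Function

section Plateau

variable {E : Type*} [NormedAddCommGroup E] [MeasurableSpace E] [ProperSpace E]
  {μ : Measure E} [IsFiniteMeasureOnCompacts μ]

lemma integrable_of_bounded_of_support_subset_closedBall {f : E → ℝ} {C ρ : ℝ}
    (hf : AEStronglyMeasurable f μ) (hC : ∀ x, ‖f x‖ ≤ C) (hsupp : support f ⊆ closedBall 0 ρ) :
    Integrable f μ :=
  (integrableOn_iff_integrable_of_support_subset hsupp).1 <|
    .of_bound measure_closedBall_lt_top hf.restrict C (ae_of_all _ hC)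

lemma mul_measureReal_le_integral_of_eqOn {α : Type*} [MeasurableSpace α] {μ : Measure α}
    {f : α → ℝ} {s : Set α} {c : ℝ} (hs : MeasurableSet s) (hf : Integrable f μ) (hf0 : 0 ≤ f)
    (hfs : EqOn f (fun _ ↦ c) s) :
    c * μ.real s ≤ ∫ x, f x ∂μ :=
  calc c * μ.real s = ∫ x in s, f x ∂μ := by
        rw [setIntegral_congr_fun hs hfs, setIntegral_const, smul_eq_mul, mul_comm]
    _ ≤ ∫ x, f x ∂μ := setIntegral_le_integral hf (.of_forall hf0)

lemma mul_measureReal_ball_le_integral_exp_sq_sub_one [OpensMeasurableSpace E] {u : E → ℝ}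
    {κ a r ρ : ℝ} (hκ : 0 ≤ κ) (hu : Measurable u) (hua : ∀ x, |u x| ≤ a)
    (hplateau : EqOn u (fun _ ↦ a) (ball 0 r))
    (hsupp : support u ⊆ closedBall 0 ρ) :
    (exp (κ * a ^ 2) - 1) * μ.real (ball 0 r) ≤ ∫ x, (exp (κ * u x ^ 2) - 1) ∂μ := by
  have hle : ∀ x, exp (κ * u x ^ 2) - 1 ≤ exp (κ * a ^ 2) - 1 := fun x ↦ by
    have hsq : u x ^ 2 ≤ a ^ 2 := sq_le_sq' (abs_le.1 (hua x)).1 (abs_le.1 (hua x)).2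
    gcongr
  have hnonneg : ∀ x, 0 ≤ exp (κ * u x ^ 2) - 1 := fun x ↦ by
    simpa using one_le_exp (by positivity : 0 ≤ κ * u x ^ 2)
  refine mul_measureReal_le_integral_of_eqOn measurableSet_ball ?_ hnonneg fun x hx ↦ ?_
  · refine integrable_of_bounded_of_support_subset_closedBall (C := exp (κ * a ^ 2) - 1) (ρ := ρ)
      (by fun_prop) (fun x ↦ ?_) fun x hx ↦ hsupp fun hux ↦ hx ?_
    · rw [norm_of_nonneg (hnonneg x)]; exact hle x
    · simp [hux]
  · simp [hplateau hx]

end Plateau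

section Moser

variable {E : Type*} [NormedAddCommGroup E]

noncomputable def moserFunction (n : ℕ) (x : E) : ℝ :=
  if ‖x‖ ≤ 1 / (n : ℝ) then (1 / √(2 * π)) * √(log n)
  else if ‖x‖ ≤ 1 then (1 / √(2 * π)) * (1 / √(log n)) * log (1 / ‖x‖)
  else 0

lemma moserFunction_nonneg (n : ℕ) (x : E) : 0 ≤ moserFunction n x := by
  unfold moserFunction
  split_ifs with hsmall hunit
  · positivity
  · have hx : 0 < ‖x‖ := (one_div_nonneg.2 n.cast_nonneg).trans_lt (not_le.1 hsmall)
    have : 0 ≤ log (1 / ‖x‖) := log_nonneg ((one_le_div hx).2 hunit)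
    positivity
  · rfl

lemma moserFunction_le {n : ℕ} (hn : 0 < n) (x : E) :
    moserFunction n x ≤ (1 / √(2 * π)) * √(log n) := by
  unfold moserFunction
  split_ifs with hsmall hunit
  · rfl
  · have hn' : (0 : ℝ) < n := Nat.cast_pos.2 hn
    have hsmall : 1 / (n : ℝ) < ‖x‖ := not_le.1 hsmall
    have hx : 0 < ‖x‖ := (one_div_pos.2 hn').trans hsmall
    have hlog : log (1 / ‖x‖) ≤ log n :=
      log_le_log (by positivity) ((one_div_lt hn' hx).1 hsmall).le
    calc (1 / √(2 * π)) * (1 / √(log n)) * log (1 / ‖x‖)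
        ≤ (1 / √(2 * π)) * (1 / √(log n)) * log n := by gcongr
      _ = (1 / √(2 * π)) * √(log n) := by rw [mul_assoc, one_div_mul_eq_div (√(log n)), div_sqrt]
  · positivity

lemma moserFunction_of_norm_le {n : ℕ} {x : E} (hx : ‖x‖ ≤ 1 / (n : ℝ)) :
    moserFunction n x = (1 / √(2 * π)) * √(log n) :=
  if_pos hx

lemma moserFunction_of_one_lt_norm {n : ℕ} (hn : 0 < n) {x : E} (hx : 1 < ‖x‖) :
    moserFunction n x = 0 := by
  have : 1 / (n : ℝ) ≤ 1 := div_le_one_of_le₀ (by exact_mod_cast hn) n.cast_nonneg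
  rw [moserFunction, if_neg (by linarith), if_neg hx.not_ge]

lemma measurable_moserFunction [MeasurableSpace E] [OpensMeasurableSpace E] (n : ℕ) :
    Measurable (moserFunction n : E → ℝ) := by
  unfold moserFunction
  refine Measurable.ite (measurableSet_le (by fun_prop) (by fun_prop)) measurable_const
    (Measurable.ite (measurableSet_le (by fun_prop) (by fun_prop)) ?_ measurable_const)
  exact measurable_const.mul (measurable_log.comp (measurable_const.div measurable_norm))

end Moser

lemma sqrt_eq_exp_log_div_two {x : ℝ} (hx : 0 < x) : √x = exp (log x / 2) := by
  rw [sqrt_eq_rpow, rpow_def_of_pos hx]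
  ring_nf

lemma one_lt_log_of_three_le {x : ℝ} (hx : 3 ≤ x) : 1 < log x :=
  (lt_log_iff_exp_lt (by linarith)).2 (exp_one_lt_three.trans_le hx)

lemma four_pi_mul_sq_lambda_peak {L : ℝ} (hL : 0 < L) :
    4 * π * (√(1 - log L / (4 * L)) * (1 / √(2 * π) * √L)) ^ 2 = 2 * L - log L / 2 := by
  have hrad : 0 ≤ 1 - log L / (4 * L) := by
    rw [sub_nonneg, div_le_one (by positivity)]
    linarith [log_le_sub_one_of_pos hL]
  rw [mul_pow, mul_pow, div_pow, sq_sqrt hrad, sq_sqrt (by positivity), sq_sqrt hL.le]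
  field_simp
  ring

lemma exp_four_pi_mul_sq_lambda_peak {x : ℝ} (hx : 1 < x) :
    exp (4 * π * (√(1 - log (log x) / (4 * log x)) * (1 / √(2 * π) * √(log x))) ^ 2) =
      x ^ 2 / √(log x) := by
  have hL := log_pos hx
  rw [four_pi_mul_sq_lambda_peak hL, exp_sub, sqrt_eq_exp_log_div_two hL, two_mul, exp_add,
    exp_log (by linarith), sq]

lemma mul_pi_sq_le_integral_exp_rescaled_moser {n : ℕ} (hn : 0 < n) {lam R : ℝ}
    (hlam : 0 ≤ lam) (hR : 0 < R) :
    (exp (4 * π * (lam * (1 / √(2 * π) * √(log n))) ^ 2) - 1) * (π * (R / n) ^ 2) ≤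
      ∫ x : EuclideanSpace ℝ (Fin 2),
        (exp (4 * π * (lam * moserFunction n (R⁻¹ • x)) ^ 2) - 1) := by
  have hnorm (x : EuclideanSpace ℝ (Fin 2)) : ‖R⁻¹ • x‖ = ‖x‖ / R := by
    rw [norm_smul, norm_inv, norm_of_nonneg hR.le, inv_mul_eq_div]
  have hvol : volume.real (ball (0 : EuclideanSpace ℝ (Fin 2)) (R / n)) = π * (R / n) ^ 2 := by
    rw [measureReal_def, EuclideanSpace.volume_ball_fin_two, ← ENNReal.ofReal_pow (by positivity),
      ← ENNReal.ofReal_mul (by positivity), ENNReal.toReal_ofReal (by positivity), mul_comm]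
  rw [← hvol]
  refine mul_measureReal_ball_le_integral_exp_sq_sub_one (ρ := R) (by positivity)
    (measurable_const.mul ((measurable_moserFunction n).comp (measurable_const_smul _)))
    (fun x ↦ ?_) (fun x hx ↦ ?_) (fun x hx ↦ ?_)
  · rw [abs_of_nonneg (mul_nonneg hlam (moserFunction_nonneg n _))]
    exact mul_le_mul_of_nonneg_left (moserFunction_le hn _) hlam
  · rw [mem_ball_zero_iff] at hx
    rw [moserFunction_of_norm_le (by rw [hnorm, div_le_iff₀ hR, one_div_mul_eq_div]; exact hx.le)]
  · by_contra hxR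
    rw [mem_closedBall_zero_iff, not_le] at hxR
    have h1 : 1 < ‖R⁻¹ • x‖ := by rwa [hnorm, one_lt_div hR]
    exact hx (by simp only [moserFunction_of_one_lt_norm hn h1, mul_zero])

lemma tendsto_moser_lower_bound :
    Tendsto (fun n : ℕ ↦ π * (√(log n) / log (log n)) ^ 2 * (1 / √(log n) - 1 / (n : ℝ) ^ 2))
      atTop atTop := by
  have hloglog : Tendsto (fun n : ℕ ↦ log (log n)) atTop atTop :=
    tendsto_log_atTop.comp (tendsto_log_atTop.comp tendsto_natCast_atTop_atTop)
  refine tendsto_atTop_mono' atTop ?_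
    (((tendsto_exp_mul_div_rpow_atTop 2 (1 / 2) (by norm_num)).comp hloglog).const_mul_atTop
      (by positivity : 0 < π / 2))
  filter_upwards [eventually_ge_atTop 3] with n hn
  have hn3 : (3 : ℝ) ≤ n := by exact_mod_cast hn
  have hL := one_lt_log_of_three_le hn3
  have hsq : 2 * √(log n) ≤ (n : ℝ) ^ 2 :=
    calc 2 * √(log n) ≤ log n + 1 := by nlinarith [sq_sqrt (by linarith : 0 ≤ log n)]
      _ ≤ n := by linarith [log_le_sub_one_of_pos (by linarith : (0 : ℝ) < n)]
      _ ≤ (n : ℝ) ^ 2 := by nlinarith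
  calc π / 2 * (exp (1 / 2 * log (log n)) / log (log n) ^ (2 : ℝ))
      = π * (√(log n) / log (log n)) ^ 2 * (1 / √(log n) - 1 / (2 * √(log n))) := by
        rw [sqrt_eq_exp_log_div_two (by linarith), rpow_two]
        field_simp
        ring_nf
    _ ≤ π * (√(log n) / log (log n)) ^ 2 * (1 / √(log n) - 1 / (n : ℝ) ^ 2) := by
        gcongr

theorem rescaled_moser_blow_up
    (w : ℕ → EuclideanSpace ℝ (Fin 2) → ℝ)
    (hw : ∀ n, 2 ≤ n → ∀ x : EuclideanSpace ℝ (Fin 2),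
      w n x = if ‖x‖ ≤ 1 / (n : ℝ) then (1 / Real.sqrt (2 * π)) * Real.sqrt (Real.log n)
        else if ‖x‖ ≤ 1 then
          (1 / Real.sqrt (2 * π)) * (1 / Real.sqrt (Real.log n)) * Real.log (1 / ‖x‖)
        else 0)
    (lam R : ℕ → ℝ)
    (hlam : ∀ n, lam n = Real.sqrt (1 - Real.log (Real.log n) / (4 * Real.log n)))
    (hR : ∀ n, R n = Real.sqrt (Real.log n) / Real.log (Real.log n))
    (u : ℕ → EuclideanSpace ℝ (Fin 2) → ℝ)
    (hu : ∀ n, ∀ x : EuclideanSpace ℝ (Fin 2), u n x = lam n * w n ((R n)⁻¹ • x)) :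
    (∀ n, 3 ≤ n →
      π * (R n) ^ 2 * (1 / Real.sqrt (Real.log n) - 1 / (n : ℝ) ^ 2) ≤
        ∫ x : EuclideanSpace ℝ (Fin 2), (Real.exp (4 * π * (u n x) ^ 2) - 1) ∂volume) ∧
    Tendsto (fun n : ℕ =>
      ∫ x : EuclideanSpace ℝ (Fin 2), (Real.exp (4 * π * (u n x) ^ 2) - 1) ∂volume)
      atTop atTop := by
  have hlower (n : ℕ) (hn : 3 ≤ n) :
      π * (R n) ^ 2 * (1 / √(log n) - 1 / (n : ℝ) ^ 2) ≤
        ∫ x : EuclideanSpace ℝ (Fin 2), (exp (4 * π * (u n x) ^ 2) - 1) := by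
    have hn3 : (3 : ℝ) ≤ n := by exact_mod_cast hn
    have hL := one_lt_log_of_three_le hn3
    have hun (x : EuclideanSpace ℝ (Fin 2)) : u n x = lam n * moserFunction n ((R n)⁻¹ • x) :=
      (hu n x).trans (congrArg (lam n * ·) (hw n (by omega) _))
    calc π * (R n) ^ 2 * (1 / √(log n) - 1 / (n : ℝ) ^ 2)
        = (exp (4 * π * (lam n * (1 / √(2 * π) * √(log n))) ^ 2) - 1) * (π * (R n / n) ^ 2) := by
          rw [hlam, exp_four_pi_mul_sq_lambda_peak (by linarith)]
          field_simp
      _ ≤ _ := mul_pi_sq_le_integral_exp_rescaled_moser (by omega) (by rw [hlam]; positivity)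
          (by rw [hR]; have := log_pos hL; positivity)
      _ = _ := by simp only [hun]
  refine ⟨hlower, tendsto_atTop_mono' atTop ?_ tendsto_moser_lower_bound⟩
  filter_upwards [eventually_ge_atTop 3] with n hn
  simpa only [hR] using hlower n hn
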